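/- Let V be a finite type and E a DAG on V. Let X = {X₁, …, X_k} (k ≥ 1, distinct), {Y}, and W be pairwise disjoint vertex sets with causal ordering W < {X₁} < ⋯ < {X_k} < {Y}. Suppose there exist W₁, …, W_k ∈ W and Z ⊆ W \ {W₁, …, W_k} such that for every i ∈ {1, …, k}: (i) W_i and Y are d-connected given Z ∪ {X₁, …, X_{i-1}}, and (ii) W_i and Y are d-separated given Z ∪ {X₁, …, X_i}. Then for every i there is a directed path from X_i to Y with at least one edge, and Z ∪ (X \ {X_i}) blocks every back-door path from X_i to Y; in particular Z satisfies the back-door criterion relative to (X, {Y}). -/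

import Mathlib

open scoped Classical

variable {V : Type*}

/-- `a` is an ancestor of `b` (every vertex is its own ancestor). -/
def Anc (E : V → V → Prop) (a b : V) : Prop := Relation.ReflTransGen E a b

/-- A path in a directed graph `E` from `a` to `b`: a sequence of distinct vertices
`a = vtx 0, …, vtx len = b` (`len ≥ 1`) in which consecutive vertices are joined
by an edge of `E` in either direction. -/
structure GPath (E : V → V → Prop) (a b : V) where
  len : ℕ
  len_pos : 0 < len
  vtx : ℕ → V
  first : vtx 0 = a
  last : vtx len = b
  inj : ∀ i j, i ≤ len → j ≤ len → vtx i = vtx j → i = j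
  adj : ∀ i, i < len → E (vtx i) (vtx (i + 1)) ∨ E (vtx (i + 1)) (vtx i)

namespace GPath

variable {E : V → V → Prop} {a b : V}

/-- The interior vertex at position `i` is a collider on the path. -/
def IsColliderAt (p : GPath E a b) (i : ℕ) : Prop :=
  0 < i ∧ i < p.len ∧ E (p.vtx (i - 1)) (p.vtx i) ∧ E (p.vtx (i + 1)) (p.vtx i)

/-- A path is open given `S` if no non-collider on it lies in `S` and every collider
on it has a descendant in `S`. -/
def OpenGiven (p : GPath E a b) (S : Set V) : Prop :=
  (∀ i, 0 < i → i < p.len → ¬ p.IsColliderAt i → p.vtx i ∉ S) ∧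
  (∀ i, p.IsColliderAt i → ∃ d ∈ S, Anc E (p.vtx i) d)

/-- A back-door path: the first edge points into the first vertex. -/
def IsBackdoor (p : GPath E a b) : Prop := E (p.vtx 1) (p.vtx 0)

/-- A causal (directed) path. -/
def Causal (p : GPath E a b) : Prop := ∀ i, i < p.len → E (p.vtx i) (p.vtx (i + 1))

/-- A path is proper with respect to `X` if only its first vertex lies in `X`. -/
def ProperFrom (p : GPath E a b) (X : Set V) : Prop :=
  ∀ i, 0 < i → i ≤ p.len → p.vtx i ∉ X

/-- The vertex `w` lies on the path. -/
def MemV (p : GPath E a b) (w : V) : Prop := ∃ i ≤ p.len, p.vtx i = w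

/-- The number of colliders on the path. -/
noncomputable def numColliders (p : GPath E a b) : ℕ := Set.ncard {i | p.IsColliderAt i}

end GPath

/-- `A` and `B` are d-separated given `S`: every path from `A` to `B` is blocked given `S`. -/
def DSep (E : V → V → Prop) (A B S : Set V) : Prop :=
  ∀ a ∈ A, ∀ b ∈ B, ∀ p : GPath E a b, ¬ p.OpenGiven S

/-- `A` and `B` are d-connected given `S`: some path from `A` to `B` is open given `S`. -/
def DConn (E : V → V → Prop) (A B S : Set V) : Prop :=
  ∃ a ∈ A, ∃ b ∈ B, ∃ p : GPath E a b, p.OpenGiven S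

/-- The set of descendants of a vertex set `S`. -/
def descendants (E : V → V → Prop) (S : Set V) : Set V := {d | ∃ s ∈ S, Anc E s d}

/-- `S` blocks every back-door path from `x` to `y`. -/
def BlocksBackdoor (E : V → V → Prop) (x y : V) (S : Set V) : Prop :=
  ∀ p : GPath E x y, p.IsBackdoor → ¬ p.OpenGiven S

/-- The back-door criterion for `Z` relative to `(X, Y)`. -/
def BackdoorCriterion (E : V → V → Prop) (X Y Z : Set V) : Prop :=
  Z ∩ descendants E X = ∅ ∧
  ∀ x ∈ X, ∀ y ∈ Y, BlocksBackdoor E x y (Z ∪ (X \ {x}))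

/-- The adjustment criterion for `Z` relative to `(X, Y)`: (a) `Z` contains no
descendant of any `w ∉ X` lying on a proper causal path from `X` to `Y`, and
(b) `Z` blocks every proper non-causal path from `X` to `Y`. -/
def AdjustmentCriterion (E : V → V → Prop) (X Y Z : Set V) : Prop :=
  (∀ w, w ∉ X →
      (∃ x ∈ X, ∃ y ∈ Y, ∃ p : GPath E x y, p.ProperFrom X ∧ p.Causal ∧ p.MemV w) →
      ∀ z ∈ Z, ¬ Anc E w z) ∧
  (∀ x ∈ X, ∀ y ∈ Y, ∀ p : GPath E x y, p.ProperFrom X → ¬ p.Causal → ¬ p.OpenGiven Z)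


/-!
Walks, on which vertices may repeat, glue more easily than paths, and an open walk between
distinct vertices shortcuts to an open path; so walks may witness d-connection.

Adding `X i` to the conditioning set blocks a path from `Wf i` to `Y` open given
`Z ∪ {X j | j < i}`, so `X i` is a non-collider on it. `X i` is an ancestor neither of `Wf i`
nor of `Z ∪ {X j | j < i}`, so following the arrows the path reads `Wf i ⋯ → X i → ⋯ → Y`.
This gives the directed path from `X i` to `Y`, and a walk from `Wf i` into `X i` open given
`Z ∪ {X j | j ≤ i}`. If a back-door path from `X i` were open given `Z ∪ (X \ {X i})`, it
could be glued, with a collider at some `X j` with `j ≥ i`, to the walk into `X j`. The result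
would be a walk from `Wf j` to `Y` open given `Z ∪ {X t | t ≤ j}`, contradicting (ii).
-/

open Relation Set

section Walks

variable {E : V → V → Prop} {S T : Set V} {a b c u v w x : V}

lemma edge_asymm (hdag : Irreflexive (TransGen E)) (h : E u v) : ¬ E v u :=
  fun h' => hdag u (.head h (.single h'))

/-- The walk passes its vertex `v`, between its neighbours `u` and `w`, when conditioning
on `S`. -/
def TripleOpen (E : V → V → Prop) (S : Set V) (u v w : V) : Prop :=
  (E u v ∧ E w v → ∃ d ∈ S, Anc E v d) ∧ (¬ (E u v ∧ E w v) → v ∉ S)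

lemma TripleOpen.symm (h : TripleOpen E S u v w) : TripleOpen E S w v u :=
  ⟨fun hc => h.1 hc.symm, fun hc => h.2 fun h' => hc h'.symm⟩

lemma tripleOpen_of_mem (hv : v ∈ S) (hu : E u v) (hw : E w v) : TripleOpen E S u v w :=
  ⟨fun _ => ⟨v, hv, .refl⟩, fun hc => absurd ⟨hu, hw⟩ hc⟩

lemma tripleOpen_of_edge_out (hdag : Irreflexive (TransGen E)) (hu : E v u) (hv : v ∉ S) :
    TripleOpen E S u v w :=
  ⟨fun hc => absurd hc.1 (edge_asymm hdag hu), fun _ => hv⟩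

lemma TripleOpen.eq_of_not_insert (h : TripleOpen E S u v w)
    (h' : ¬ TripleOpen E (insert x S) u v w) : v = x ∧ ¬ (E u v ∧ E w v) := by
  by_cases hc : E u v ∧ E w v
  · obtain ⟨d, hd, hvd⟩ := h.1 hc
    exact absurd ⟨fun _ => ⟨d, .inr hd, hvd⟩, fun h'' => absurd hc h''⟩ h'
  · refine ⟨?_, hc⟩
    by_contra hvx
    exact h' ⟨fun h'' => absurd h'' hc, fun _ hv => hv.elim hvx (h.2 hc)⟩

structure GWalk (E : V → V → Prop) (a b : V) where
  len : ℕ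
  vtx : ℕ → V
  first : vtx 0 = a
  last : vtx len = b
  adj : ∀ i, i < len → E (vtx i) (vtx (i + 1)) ∨ E (vtx (i + 1)) (vtx i)

namespace GWalk

def OpenGiven (p : GWalk E a b) (S : Set V) : Prop :=
  ∀ s, 0 < s → s < p.len → TripleOpen E S (p.vtx (s - 1)) (p.vtx s) (p.vtx (s + 1))

def cons (h : E a b ∨ E b a) (p : GWalk E b c) : GWalk E a c where
  len := p.len + 1
  vtx
    | 0 => a
    | s + 1 => p.vtx s
  first := rfl
  last := p.last
  adj
    | 0, _ => by simpa [p.first] using h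
    | s + 1, hs => p.adj s (by omega)

def rev (p : GWalk E a b) : GWalk E b a where
  len := p.len
  vtx s := p.vtx (p.len - s)
  first := by simpa using p.last
  last := by simpa using p.first
  adj i hi := by
    have h := p.adj (p.len - (i + 1)) (by omega)
    rwa [show p.len - (i + 1) + 1 = p.len - i by omega, or_comm] at h

def take (p : GWalk E a b) (m : ℕ) (hm : m ≤ p.len) (h : p.vtx m = c) : GWalk E a c :=
  ⟨m, p.vtx, p.first, h, fun i hi => p.adj i (by omega)⟩

def drop (p : GWalk E a b) (m : ℕ) (hm : m ≤ p.len) (h : p.vtx m = c) : GWalk E c b where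
  len := p.len - m
  vtx s := p.vtx (m + s)
  first := h
  last := by rw [Nat.add_sub_cancel' hm, p.last]
  adj i hi := p.adj (m + i) (by omega)

def append (p : GWalk E a b) (q : GWalk E b c) : GWalk E a c where
  len := p.len + q.len
  vtx s := if s < p.len then p.vtx s else q.vtx (s - p.len)
  first := by
    split_ifs with h
    · exact p.first
    · rw [Nat.zero_sub, q.first, ← p.last, Nat.eq_zero_of_not_pos h, p.first]
  last := by simp [q.last]
  adj i hi := by
    by_cases h : i + 1 < p.len
    · simpa [h, show i < p.len by omega] using p.adj i (by omega)
    by_cases h' : i < p.len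
    · have : i + 1 - p.len = 0 := by omega
      simpa [h, h', this, q.first, ← p.last, show p.len = i + 1 by omega] using p.adj i h'
    · simpa [h, h', show i + 1 - p.len = i - p.len + 1 by omega] using q.adj (i - p.len) (by omega)

lemma append_vtx_of_le {p : GWalk E a b} {q : GWalk E b c} {s : ℕ} (hs : s ≤ p.len) :
    (p.append q).vtx s = p.vtx s := by
  rcases hs.lt_or_eq with hs | rfl
  · exact if_pos hs
  · simp [append, p.last, q.first]

lemma append_vtx_of_ge {p : GWalk E a b} {q : GWalk E b c} {s : ℕ} (hs : p.len ≤ s) :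
    (p.append q).vtx s = q.vtx (s - p.len) :=
  if_neg (by omega)

namespace OpenGiven

variable {p : GWalk E a b}

lemma rev (hp : p.OpenGiven S) : p.rev.OpenGiven S := by
  intro s hs0 (hs : s < p.len)
  have h := (hp (p.len - s) (by omega) (by omega)).symm
  simp only [GWalk.rev]
  rwa [show p.len - (s - 1) = p.len - s + 1 by omega, show p.len - (s + 1) = p.len - s - 1 by omega]

lemma take (hp : p.OpenGiven S) (m : ℕ) (hm : m ≤ p.len) (h : p.vtx m = c) :
    (p.take m hm h).OpenGiven S :=
  fun s hs0 hs => hp s hs0 (by simp [GWalk.take] at hs; omega)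

lemma drop (hp : p.OpenGiven S) (m : ℕ) (hm : m ≤ p.len) (h : p.vtx m = c) :
    (p.drop m hm h).OpenGiven S := by
  intro s hs0 hs
  have h := hp (m + s) (by omega) (by simp [GWalk.drop] at hs; omega)
  simp only [GWalk.drop]
  rwa [show m + (s - 1) = m + s - 1 by omega, ← add_assoc]

lemma append {q : GWalk E b c} (hp : p.OpenGiven S) (hq : q.OpenGiven S)
    (hseam : 0 < p.len → 0 < q.len → TripleOpen E S (p.vtx (p.len - 1)) b (q.vtx 1)) :
    (p.append q).OpenGiven S := by
  intro s hs0 hs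
  simp only [GWalk.append] at hs
  rcases Nat.lt_trichotomy s p.len with h | rfl | h
  · simpa only [GWalk.append_vtx_of_le (by omega : s - 1 ≤ p.len),
      GWalk.append_vtx_of_le h.le, GWalk.append_vtx_of_le (by omega : s + 1 ≤ p.len)]
      using hp s hs0 h
  · rw [GWalk.append_vtx_of_le (Nat.sub_le _ 1), GWalk.append_vtx_of_le le_rfl,
      GWalk.append_vtx_of_ge (Nat.le_add_right _ 1), p.last, Nat.add_sub_cancel_left]
    exact hseam hs0 (by omega)
  · have h' := hq (s - p.len) (by omega) (by omega)
    simp only [GWalk.append_vtx_of_ge h.le, GWalk.append_vtx_of_ge (by omega : p.len ≤ s - 1),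
      GWalk.append_vtx_of_ge (by omega : p.len ≤ s + 1)]
    rwa [show s - 1 - p.len = s - p.len - 1 by omega, show s + 1 - p.len = s - p.len + 1 by omega]

lemma cons {q : GWalk E b c} (hdag : Irreflexive (TransGen E)) (hq : q.OpenGiven S) (h : E b a)
    (hb : b ∉ S) : (GWalk.cons (.inr h) q).OpenGiven S := by
  rintro (_ | _ | s) hs0 hs
  · omega
  · simpa [GWalk.cons, q.first] using tripleOpen_of_edge_out (w := q.vtx 1) hdag h hb
  · exact hq (s + 1) (by omega) (by simp [GWalk.cons] at hs; omega)

lemma mono (hp : p.OpenGiven S) (hST : S ⊆ T)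
    (h : ∀ s, 0 < s → s < p.len → p.vtx s ∈ T → p.vtx s ∈ S) : p.OpenGiven T := by
  intro s hs0 hs
  obtain ⟨hcol, hnc⟩ := hp s hs0 hs
  exact ⟨fun hc => (hcol hc).imp fun d hd => ⟨hST hd.1, hd.2⟩,
    fun hc hT => hnc hc (h s hs0 hs hT)⟩

/-- Following the walk forward from an edge out of `p.vtx m`, the arrows keep pointing forward
until the walk ends or a collider is met; that collider has a descendant in `S`. -/
lemma transGen_or_anc (hp : p.OpenGiven S) {m : ℕ} (hm : m < p.len)
    (he : E (p.vtx m) (p.vtx (m + 1))) :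
    TransGen E (p.vtx m) b ∨ ∃ d ∈ S, Anc E (p.vtx m) d := by
  obtain ⟨n, hn⟩ : ∃ n, p.len = m + 1 + n := ⟨p.len - (m + 1), by omega⟩
  induction n generalizing m with
  | zero =>
    have hb : p.vtx (m + 1) = b := by rw [show m + 1 = p.len by omega, p.last]
    exact .inl (.single (by rwa [hb] at he))
  | succ n ih =>
    rcases p.adj (m + 1) (by omega) with h | h
    · rcases ih (by omega) h (by omega) with h' | ⟨d, hd, h'⟩
      · exact .inl (.head he h')
      · exact .inr ⟨d, hd, .head he h'⟩
    · obtain ⟨d, hd, h'⟩ := (hp (m + 1) (by omega) (by omega)).1 ⟨by simpa using he, h⟩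
      exact .inr ⟨d, hd, .head he h'⟩

lemma edge_into_and_transGen (hp : p.OpenGiven S) {m : ℕ} (hm0 : 0 < m) (hm : m < p.len)
    (hnc : ¬ (E (p.vtx (m - 1)) (p.vtx m) ∧ E (p.vtx (m + 1)) (p.vtx m)))
    (ha : ¬ Anc E (p.vtx m) a) (hS : ∀ d ∈ S, ¬ Anc E (p.vtx m) d) :
    E (p.vtx (m - 1)) (p.vtx m) ∧ TransGen E (p.vtx m) b := by
  have hin : E (p.vtx (m - 1)) (p.vtx m) := by
    refine (Nat.sub_add_cancel hm0 ▸ p.adj (m - 1) (by omega)).resolve_right fun he => ?_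
    have he' : E (p.rev.vtx (p.len - m)) (p.rev.vtx (p.len - m + 1)) := by
      simpa [GWalk.rev, Nat.sub_sub_self hm.le, show p.len - (p.len - m + 1) = m - 1 by omega]
        using he
    rcases hp.rev.transGen_or_anc (by simp [GWalk.rev]; omega) he' with h | ⟨d, hd, h⟩
    · exact ha (by simpa [GWalk.rev, Nat.sub_sub_self hm.le, Anc] using h.to_reflTransGen)
    · exact hS d hd (by simpa [GWalk.rev, Nat.sub_sub_self hm.le] using h)
  have hout : E (p.vtx m) (p.vtx (m + 1)) :=
    (p.adj m hm).resolve_right fun h => hnc ⟨hin, h⟩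
  refine ⟨hin, (hp.transGen_or_anc hm hout).resolve_right ?_⟩
  rintro ⟨d, hd, h⟩
  exact hS d hd h

/-- Cutting out the closed subwalk between two visits `i < j` of the same vertex keeps the
walk open at that vertex. -/
lemma tripleOpen_shortcut (hdag : Irreflexive (TransGen E)) (hp : p.OpenGiven S) {i j : ℕ}
    (hij : i < j) (hi : 0 < i) (hj : j < p.len) (heq : p.vtx i = p.vtx j) :
    TripleOpen E S (p.vtx (i - 1)) (p.vtx i) (p.vtx (j + 1)) := by
  obtain ⟨hicol, hinc⟩ := hp i hi (by omega)
  obtain ⟨-, hjnc⟩ := hp j (by omega) hj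
  constructor
  · rintro ⟨h1, h2⟩
    by_cases h3 : E (p.vtx (i + 1)) (p.vtx i)
    · exact hicol ⟨h1, h3⟩
    · have he := (p.adj i (by omega)).resolve_right h3
      refine ((hp.take j hj.le rfl).transGen_or_anc hij he).resolve_left fun h => ?_
      exact hdag _ (heq ▸ h)
  · intro hnc
    by_cases h1 : E (p.vtx (i - 1)) (p.vtx i)
    · rw [heq]
      exact hjnc fun h => hnc ⟨h1, heq ▸ h.2⟩
    · exact hinc fun h => h1 h.1

end OpenGiven

end GWalk

namespace GPath

def toWalk (p : GPath E a b) : GWalk E a b := ⟨p.len, p.vtx, p.first, p.last, p.adj⟩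

lemma openGiven_iff (p : GPath E a b) : p.OpenGiven S ↔ p.toWalk.OpenGiven S :=
  ⟨fun h s hs0 hs => ⟨fun hc => h.2 s ⟨hs0, hs, hc⟩, fun hc => h.1 s hs0 hs fun h' => hc h'.2.2⟩,
    fun h => ⟨fun s hs0 hs hc => (h s hs0 hs).2 fun h' => hc ⟨hs0, hs, h'⟩,
      fun s hc => (h s hc.1 hc.2.1).1 hc.2.2⟩⟩

end GPath

lemma GWalk.OpenGiven.exists_path (hdag : Irreflexive (TransGen E)) (hab : a ≠ b)
    {p : GWalk E a b} (hp : p.OpenGiven S) : ∃ q : GPath E a b, q.OpenGiven S := by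
  induction h : p.len using Nat.strong_induction_on generalizing p with
  | _ n ih =>
  by_cases hrep : ∃ i j, i < j ∧ j ≤ p.len ∧ p.vtx i = p.vtx j
  · obtain ⟨i, j, hij, hj, heq⟩ := hrep
    refine ih _ ?_
      (((hp.take i (by omega) rfl).append (hp.drop j hj heq.symm)) fun hi hj' => ?_) rfl
    · simp only [GWalk.append, GWalk.take, GWalk.drop]
      omega
    · exact hp.tripleOpen_shortcut hdag hij hi (by simp [GWalk.drop] at hj'; omega) heq
  have hinj : ∀ i j, i ≤ p.len → j ≤ p.len → p.vtx i = p.vtx j → i = j := by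
    intro i j hi hj heq
    by_contra hne
    rcases Nat.lt_or_gt_of_ne hne with h | h
    · exact hrep ⟨i, j, h, hj, heq⟩
    · exact hrep ⟨j, i, h, hi, heq.symm⟩
  have hpos : 0 < p.len := Nat.pos_of_ne_zero fun h0 =>
    hab (p.first.symm.trans (by simpa [h0] using p.last))
  exact ⟨⟨p.len, hpos, p.vtx, p.first, p.last, hinj, p.adj⟩, (GPath.openGiven_iff _).2 hp⟩

lemma GWalk.OpenGiven.extend_backward (hdag : Irreflexive (TransGen E)) {p : GWalk E v b}
    (hp : p.OpenGiven S) (hp1 : E (p.vtx 1) v) (hvx : Anc E v x)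
    (hS : ∀ u, Anc E v u → TransGen E u x → u ∉ S) :
    ∃ q : GWalk E x b, E (q.vtx 1) x ∧ q.OpenGiven S := by
  induction hvx with
  | refl => exact ⟨p, hp1, hp⟩
  | @tail y x hvy hyx ih =>
    obtain ⟨q, -, hq⟩ := ih fun u hu huy => hS u hu (huy.tail hyx)
    exact ⟨.cons (.inr hyx) q, by simpa [GWalk.cons, q.first] using hyx,
      hq.cons hdag hyx (hS y hvy (.single hyx))⟩

lemma GWalk.OpenGiven.not_openGiven_of_collider (hdag : Irreflexive (TransGen E))
    (hsep : ∀ r : GPath E a b, ¬ r.OpenGiven S) (hab : a ≠ b) (hx : x ∈ S) {p : GWalk E a x}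
    (hp : p.OpenGiven S) (hp1 : E (p.vtx (p.len - 1)) x) {q : GWalk E x b}
    (hq1 : E (q.vtx 1) x) : ¬ q.OpenGiven S := fun hq =>
  let ⟨r, hr⟩ := (hp.append hq fun _ _ => tripleOpen_of_mem hx hp1 hq1).exists_path hdag hab
  hsep r hr

namespace GPath

variable {p : GPath E a b}

lemma OpenGiven.exists_walk_into_of_blocked_insert (hp : p.OpenGiven S)
    (hsep : ∀ q : GPath E a b, ¬ q.OpenGiven (insert x S))
    (ha : ¬ Anc E x a) (hS : ∀ d ∈ S, ¬ Anc E x d) :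
    TransGen E x b ∧ ∃ r : GWalk E a x, E (r.vtx (r.len - 1)) x ∧ r.OpenGiven (insert x S) := by
  rw [openGiven_iff] at hp
  obtain ⟨m, hm0, hm, hbad⟩ : ∃ m, 0 < m ∧ m < p.len ∧
      ¬ TripleOpen E (insert x S) (p.vtx (m - 1)) (p.vtx m) (p.vtx (m + 1)) := by
    by_contra! h
    exact hsep p ((openGiven_iff p).2 h)
  obtain ⟨rfl, hnc⟩ := (hp m hm0 hm).eq_of_not_insert hbad
  obtain ⟨hin, hout⟩ := hp.edge_into_and_transGen hm0 hm hnc ha hS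
  refine ⟨hout, p.toWalk.take m hm.le rfl, hin, (hp.take m hm.le rfl).mono (subset_insert _ _) ?_⟩
  rintro s hs0 (hs : s < m) (h | h)
  · exact absurd (p.inj s m (by omega) hm.le h) hs.ne
  · exact h

lemma exists_last_blocked_collider (p : GPath E a b) (S : Set V) :
    ∃ c < p.len, (c = 0 ∨ p.IsColliderAt c ∧ ∀ d ∈ S, ¬ Anc E (p.vtx c) d) ∧
      ∀ s, c < s → p.IsColliderAt s → ∃ d ∈ S, Anc E (p.vtx s) d := by
  let B c := c = 0 ∨ p.IsColliderAt c ∧ ∀ d ∈ S, ¬ Anc E (p.vtx c) d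
  have hB : B (Nat.findGreatest B p.len) := Nat.findGreatest_spec (Nat.zero_le _) (Or.inl rfl)
  refine ⟨_, ?_, hB, fun s hs hcol => ?_⟩
  · rcases hB with h | h
    · rw [h]
      exact p.len_pos
    · exact h.1.2.1
  · by_contra! h
    exact Nat.findGreatest_is_greatest hs hcol.2.1.le (Or.inr ⟨hcol, h⟩)

lemma OpenGiven.drop_toWalk (hp : p.OpenGiven T) {c : ℕ} (hc : c ≤ p.len)
    (hST : S ⊆ insert a T) (hcol : ∀ s, c < s → p.IsColliderAt s → ∃ d ∈ S, Anc E (p.vtx s) d) :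
    (p.toWalk.drop c hc rfl).OpenGiven S := by
  intro s hs0 (hs : s < p.len - c)
  simp only [GWalk.drop, toWalk]
  rw [show c + (s - 1) = c + s - 1 by omega, ← add_assoc]
  refine ⟨fun h => hcol (c + s) (by omega) ⟨by omega, by omega, h⟩, fun hnc hS => ?_⟩
  rcases hST hS with h | h
  · exact absurd (p.inj _ 0 (by omega) (by omega) (h.trans p.first.symm)) (by omega)
  · exact hp.1 (c + s) (by omega) (by omega) (fun h' => hnc h'.2.2) h

end GPath

end Walks

section Treatments

variable {E : V → V → Prop} {k : ℕ} {X : Fin (k + 1) → V} {Y : V} {Z : Set V}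

lemma union_image_Iic_eq_insert (i : Fin (k + 1)) :
    Z ∪ X '' Iic i = insert (X i) (Z ∪ X '' Iio i) := by
  rw [← Iio_insert, image_insert_eq, union_insert]

lemma union_image_Iic_mono {i j : Fin (k + 1)} (hij : i ≤ j) :
    Z ∪ X '' Iic i ⊆ Z ∪ X '' Iic j :=
  union_subset_union_right _ (image_mono (Iic_subset_Iic.2 hij))

lemma exists_first_reachable_treatment (hdag : Irreflexive (TransGen E)) {v : V} {i : Fin (k + 1)}
    (hfree : ∀ d ∈ Z ∪ X '' Iio i, ¬ Anc E v d) (hreach : ∃ j, i ≤ j ∧ Anc E v (X j)) :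
    ∃ j, i ≤ j ∧ Anc E v (X j) ∧ ∀ u, Anc E v u → TransGen E u (X j) → u ∉ Z ∪ X '' Iic j := by
  obtain ⟨j, ⟨hij, hvj⟩, hmin⟩ := wellFounded_lt.has_min {j | i ≤ j ∧ Anc E v (X j)} hreach
  refine ⟨j, hij, hvj, ?_⟩
  rintro u hvu huj (hu | ⟨t, htj, rfl⟩)
  · exact hfree u (.inl hu) hvu
  · rcases lt_or_ge t i with hti | hit
    · exact hfree _ (.inr ⟨t, hti, rfl⟩) hvu
    · rcases (show t ≤ j from htj).lt_or_eq with htj | rfl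
      · exact hmin t ⟨hit, hvu⟩ htj
      · exact hdag _ huj

/-- Cut the back-door path `p` at its last collider `p.vtx c` that `Z ∪ X '' Iic i` does not
open (or at `p.vtx 0 = X i` if there is none), and let `X j` be the first treatment with
`i ≤ j` descending from `p.vtx c`. The walk into `X j`, a directed path from `p.vtx c` to
`X j` read backwards, and the rest of `p` make up a walk from `Wf j` that is open given
`Z ∪ X '' Iic j`. -/
theorem blocksBackdoor_of_walks_into (hdag : Irreflexive (TransGen E)) {Wf : Fin (k + 1) → V}
    (hZ : ∀ i, ∀ z ∈ Z, ¬ Anc E (X i) z) (hXX : ∀ i j, i < j → ¬ Anc E (X j) (X i))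
    (hWfY : ∀ j, Wf j ≠ Y)
    (hin : ∀ j, ∃ w : GWalk E (Wf j) (X j),
      E (w.vtx (w.len - 1)) (X j) ∧ w.OpenGiven (Z ∪ X '' Iic j))
    (hsep : ∀ j, ∀ p : GPath E (Wf j) Y, ¬ p.OpenGiven (Z ∪ X '' Iic j)) (i : Fin (k + 1)) :
    BlocksBackdoor E (X i) Y (Z ∪ (range X \ {X i})) := by
  intro p hbd hp
  obtain ⟨c, hc, hcB, hlater⟩ := p.exists_last_blocked_collider (Z ∪ X '' Iic i)
  have hedge : E (p.vtx (c + 1)) (p.vtx c) := by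
    rcases hcB with rfl | ⟨hcol, -⟩
    · exact hbd
    · exact hcol.2.2.2
  have hfree : ∀ d ∈ Z ∪ X '' Iio i, ¬ Anc E (p.vtx c) d := by
    rcases hcB with rfl | ⟨-, hno⟩
    · rw [p.first]
      rintro d (hd | ⟨t, ht, rfl⟩)
      · exact hZ i d hd
      · exact hXX t i ht
    · exact fun d hd => hno d (union_subset_union_right _ (image_mono Iio_subset_Iic_self) hd)
  have hreach : ∃ j, i ≤ j ∧ Anc E (p.vtx c) (X j) := by
    rcases hcB with rfl | ⟨hcol, hno⟩
    · exact ⟨i, le_rfl, by rw [p.first]; exact .refl⟩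
    · obtain ⟨d, hd | ⟨⟨t, rfl⟩, -⟩, hvd⟩ := hp.2 c hcol
      · exact absurd hvd (hno d (.inl hd))
      · exact ⟨t, le_of_not_ge fun hti => hno _ (.inr ⟨t, hti, rfl⟩) hvd, hvd⟩
  obtain ⟨j, hij, hvj, hT⟩ := exists_first_reachable_treatment hdag hfree hreach
  have hST : Z ∪ X '' Iic j ⊆ insert (X i) (Z ∪ (range X \ {X i})) := by
    rintro _ (hz | ⟨t, -, rfl⟩)
    · exact .inr (.inl hz)
    · by_cases ht : X t = X i
      · exact .inl ht
      · exact .inr (.inr ⟨⟨t, rfl⟩, ht⟩)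
  have hdrop := hp.drop_toWalk hc.le hST fun s hs hcol =>
    (hlater s hs hcol).imp fun d hd => ⟨union_image_Iic_mono hij hd.1, hd.2⟩
  obtain ⟨R, hR1, hR⟩ := hdrop.extend_backward hdag hedge hvj hT
  obtain ⟨w, hw1, hw⟩ := hin j
  exact hw.not_openGiven_of_collider hdag (hsep j) (hWfY j) (.inr ⟨j, le_refl j, rfl⟩) hw1 hR1 hR

end Treatments

theorem stmt_4_general (E : V → V → Prop)
    (hdag : Irreflexive (Relation.TransGen E))
    (k : ℕ) (X : Fin (k + 1) → V)
    (Y : V) (W : Set V)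
    (hYW : Y ∉ W)
    (hordWX : ∀ i, ∀ w ∈ W, ¬ Anc E (X i) w)
    (hordXX : ∀ i j : Fin (k + 1), i < j → ¬ Anc E (X j) (X i))
    (Wf : Fin (k + 1) → V) (hWf : ∀ i, Wf i ∈ W)
    (Z : Set V) (hZ : Z ⊆ W \ Set.range Wf)
    (hconn : ∀ i, ∃ p : GPath E (Wf i) Y,
      p.OpenGiven (Z ∪ X '' {j : Fin (k + 1) | j < i}))
    (hsep : ∀ i, ∀ p : GPath E (Wf i) Y,
      ¬ p.OpenGiven (Z ∪ X '' {j : Fin (k + 1) | j ≤ i})) :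
    (∀ i, Relation.TransGen E (X i) Y ∧
        BlocksBackdoor E (X i) Y (Z ∪ (Set.range X \ {X i}))) ∧
      BackdoorCriterion E (Set.range X) {Y} Z := by
  have hZX : ∀ i, ∀ z ∈ Z, ¬ Anc E (X i) z := fun i z hz => hordWX i z (hZ hz).1
  have hwitness : ∀ i, TransGen E (X i) Y ∧ ∃ w : GWalk E (Wf i) (X i),
      E (w.vtx (w.len - 1)) (X i) ∧ w.OpenGiven (Z ∪ X '' Iic i) := by
    intro i
    obtain ⟨p, hp⟩ := hconn i
    have hsep' : ∀ q : GPath E (Wf i) Y, ¬ q.OpenGiven (insert (X i) (Z ∪ X '' Iio i)) := by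
      rw [← union_image_Iic_eq_insert]
      exact hsep i
    rw [union_image_Iic_eq_insert]
    refine hp.exists_walk_into_of_blocked_insert hsep' (hordWX i _ (hWf i)) ?_
    rintro d (hd | ⟨j, hj, rfl⟩)
    exacts [hZX i d hd, hordXX j i hj]
  have hblock := blocksBackdoor_of_walks_into hdag hZX hordXX
    (fun j => ne_of_mem_of_not_mem (hWf j) hYW)
    (fun j => (hwitness j).2) hsep
  refine ⟨fun i => ⟨(hwitness i).1, hblock i⟩, ?_, ?_⟩
  · refine eq_empty_of_forall_notMem ?_
    rintro z ⟨hz, _, ⟨i, rfl⟩, hanc⟩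
    exact hZX i z hz hanc
  · rintro _ ⟨i, rfl⟩ _ rfl
    exact hblock i

/-- **R1 Build (graphical version).** With treatments `X 0 < ⋯ < X k` and witnesses
`Wf i` satisfying the d-connection/d-separation conditions, every `X i` has a directed
path to `Y` with at least one edge, `Z ∪ (range X \ {X i})` blocks every back-door path
from `X i` to `Y`, and `Z` satisfies the back-door criterion relative to `(range X, {Y})`. -/
theorem stmt_4 [Fintype V] (E : V → V → Prop)
    (hdag : Irreflexive (Relation.TransGen E))
    (k : ℕ) (X : Fin (k + 1) → V) (hXinj : Function.Injective X)
    (Y : V) (W : Set V)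
    (hXY : ∀ i, X i ≠ Y) (hXW : ∀ i, X i ∉ W) (hYW : Y ∉ W)
    (hordWX : ∀ i, ∀ w ∈ W, ¬ Anc E (X i) w)
    (hordWY : ∀ w ∈ W, ¬ Anc E Y w)
    (hordXX : ∀ i j : Fin (k + 1), i < j → ¬ Anc E (X j) (X i))
    (hordXY : ∀ i, ¬ Anc E Y (X i))
    (Wf : Fin (k + 1) → V) (hWf : ∀ i, Wf i ∈ W)
    (Z : Set V) (hZ : Z ⊆ W \ Set.range Wf)
    (hconn : ∀ i, ∃ p : GPath E (Wf i) Y,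
      p.OpenGiven (Z ∪ X '' {j : Fin (k + 1) | j < i}))
    (hsep : ∀ i, ∀ p : GPath E (Wf i) Y,
      ¬ p.OpenGiven (Z ∪ X '' {j : Fin (k + 1) | j ≤ i})) :
    (∀ i, Relation.TransGen E (X i) Y ∧
        BlocksBackdoor E (X i) Y (Z ∪ (Set.range X \ {X i}))) ∧
      BackdoorCriterion E (Set.range X) {Y} Z :=
  stmt_4_general E hdag k X Y W hYW hordWX hordXX Wf hWf Z hZ hconn hsep
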